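/- arXiv:1904.03361 — 2 statements merged into one kernel-verified Lean document; each statement's English description precedes it below -/
import Mathlib

section
/- The estimate max{|Z^{(n)}(x)|, |Z̃^{(n)}(x)|} ≤ c c_1 · 2^{n+1} n! Σ_{k=0}^n C(n,k) (c_1 c_2)^k c_3^{n-k} |x-x_0|^{n+k+1}/(n+k+1)! holds for all n ≥ 0 and x ∈ [a,b]. -/
/-!
Write `t = |x - x₀|` and `J` for the primitive from `0`. Estimating the integrands of the
recursion term by term shows inductively that `‖X⁽ⁿ⁾(x)‖, ‖Y⁽ⁿ⁾(x)‖ ≤ Mₙ(t)`, where `M₀ = c` and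
`Mₙ₊₁ = 2(n+1)(c₃ J + c₁c₂ J²) Mₙ`, and then `‖Z⁽ⁿ⁾(x)‖ ≤ 2c₁ (J Mₙ)(t)`. Thus
`Mₙ = c 2ⁿ n! (c₃ J + c₁c₂ J²)ⁿ 1`. Since `J` sends `tʲ/j!` to `tʲ⁺¹/(j+1)!`, this is the
polynomial `(c₃ X + c₁c₂ X²)ⁿ` read with `Xʲ ↦ tʲ/j!`, and the binomial theorem turns
`2c₁ J Mₙ` into the stated sum.
-/

open Set intervalIntegral MeasureTheory

/-- The SPPS formal powers `(X⁽ⁿ⁾, Y⁽ⁿ⁾)` defined by the recursion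
`X⁽ⁿ⁺¹⁾ = (n+1)∫ (-r₂₁ X⁽ⁿ⁾ - r₂₂ (g/f) Y⁽ⁿ⁾ + (p₂/f²) Z⁽ⁿ⁾)`,
`Y⁽ⁿ⁺¹⁾ = (n+1)∫ (r₁₁ (f/g) X⁽ⁿ⁾ + r₁₂ Y⁽ⁿ⁾ + (p₁/g²) Z⁽ⁿ⁾)`, where
`Z⁽ⁿ⁾ = ∫ (X⁽ⁿ⁾(f²r₁₁+g²r₂₁) + Y⁽ⁿ⁾(f²r₁₂+g²r₂₂))`. -/
noncomputable def spps (p1 p2 r11 r12 r21 r22 f g : ℝ → ℂ) (x0 : ℝ) (X0 Y0 : ℝ → ℂ) :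
    ℕ → (ℝ → ℂ) × (ℝ → ℂ)
  | 0 => (X0, Y0)
  | n + 1 =>
    let X := (spps p1 p2 r11 r12 r21 r22 f g x0 X0 Y0 n).1
    let Y := (spps p1 p2 r11 r12 r21 r22 f g x0 X0 Y0 n).2
    let Z : ℝ → ℂ := fun x => ∫ s in x0..x,
      (X s * (f s ^ 2 * r11 s + g s ^ 2 * r21 s) + Y s * (f s ^ 2 * r12 s + g s ^ 2 * r22 s))
    (fun x => (n + 1 : ℂ) * ∫ s in x0..x,
        (-(r21 s) * X s - r22 s * (g s / f s) * Y s + p2 s / f s ^ 2 * Z s),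
     fun x => (n + 1 : ℂ) * ∫ s in x0..x,
        (r11 s * (f s / g s) * X s + r12 s * Y s + p1 s / g s ^ 2 * Z s))

/-- The SPPS formal power `Z⁽ⁿ⁾`. -/
noncomputable def sppsZ (p1 p2 r11 r12 r21 r22 f g : ℝ → ℂ) (x0 : ℝ) (X0 Y0 : ℝ → ℂ)
    (n : ℕ) : ℝ → ℂ := fun x => ∫ s in x0..x,
      ((spps p1 p2 r11 r12 r21 r22 f g x0 X0 Y0 n).1 s * (f s ^ 2 * r11 s + g s ^ 2 * r21 s)
        + (spps p1 p2 r11 r12 r21 r22 f g x0 X0 Y0 n).2 s * (f s ^ 2 * r12 s + g s ^ 2 * r22 s))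

/-- Initial formal power `X⁽⁰⁾(x) = f(x₀)g(x₀) ∫_{x₀}^x p₂/f²`. -/
noncomputable def sppsX0 (p2 f g : ℝ → ℂ) (x0 : ℝ) : ℝ → ℂ :=
  fun x => f x0 * g x0 * ∫ s in x0..x, p2 s / f s ^ 2

/-- Initial formal power `Y⁽⁰⁾(x) = 1 + f(x₀)g(x₀) ∫_{x₀}^x p₁/g²`. -/
noncomputable def sppsY0 (p1 f g : ℝ → ℂ) (x0 : ℝ) : ℝ → ℂ :=
  fun x => 1 + f x0 * g x0 * ∫ s in x0..x, p1 s / g s ^ 2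

/-- Initial formal power `X̃⁽⁰⁾(x) = 1 - f(x₀)g(x₀) ∫_{x₀}^x p₂/f²`. -/
noncomputable def sppsXt0 (p2 f g : ℝ → ℂ) (x0 : ℝ) : ℝ → ℂ :=
  fun x => 1 - f x0 * g x0 * ∫ s in x0..x, p2 s / f s ^ 2

/-- Initial formal power `Ỹ⁽⁰⁾(x) = -f(x₀)g(x₀) ∫_{x₀}^x p₁/g²`. -/
noncomputable def sppsYt0 (p1 f g : ℝ → ℂ) (x0 : ℝ) : ℝ → ℂ :=
  fun x => -(f x0 * g x0) * ∫ s in x0..x, p1 s / g s ^ 2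

/-- The max-norm (sup norm) of a function on `[a,b]`. -/
noncomputable def supNorm (a b : ℝ) (h : ℝ → ℂ) : ℝ :=
  sSup ((fun x => ‖h x‖) '' Icc a b)

section Majorant

open Polynomial Nat

noncomputable def borelEval (t : ℝ) : ℝ[X] →ₗ[ℝ] ℝ :=
  Polynomial.lsum fun j => (t ^ j / j !) • LinearMap.id

theorem borelEval_monomial (t : ℝ) (j : ℕ) (a : ℝ) :
    borelEval t (monomial j a) = a * (t ^ j / j !) := by
  simp [borelEval, mul_comm]

theorem borelEval_C_mul (t a : ℝ) (p : ℝ[X]) : borelEval t (C a * p) = a * borelEval t p := by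
  rw [← smul_eq_C_mul, map_smul, smul_eq_mul]

theorem continuous_borelEval (p : ℝ[X]) : Continuous fun t => borelEval t p := by
  induction p using Polynomial.induction_on' with
  | add p q hp hq => simp only [map_add]; exact hp.add hq
  | monomial j a => simp only [borelEval_monomial]; fun_prop

theorem integral_borelEval (p : ℝ[X]) (t : ℝ) :
    ∫ s in 0..t, borelEval s p = borelEval t (X * p) := by
  induction p using Polynomial.induction_on' with
  | add p q hp hq =>
    simp only [map_add, mul_add]
    rw [integral_add ((continuous_borelEval p).intervalIntegrable _ _)
      ((continuous_borelEval q).intervalIntegrable _ _), hp, hq]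
  | monomial j a =>
    simp only [borelEval_monomial, X_mul_monomial, intervalIntegral.integral_div,
      intervalIntegral.integral_const_mul, integral_pow, factorial_succ]
    push_cast
    field_simp
    ring

theorem X_mul_C_mul_X_sq_add_C_mul_X_pow {R : Type*} [CommSemiring R] (α β : R) (n : ℕ) :
    X * (C α * X ^ 2 + C β * X) ^ n
      = ∑ k ∈ Finset.range (n + 1), C (n.choose k * α ^ k * β ^ (n - k)) * X ^ (n + k + 1) := by
  rw [add_pow, Finset.mul_sum]
  refine Finset.sum_congr rfl fun k hk => ?_
  obtain ⟨m, rfl⟩ := Nat.exists_eq_add_of_le (Finset.mem_range_succ_iff.mp hk)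
  simp only [Nat.add_sub_cancel_left, map_mul, map_pow, map_natCast]
  ring

variable {c c1 c2 c3 : ℝ}

noncomputable def majorantPoly (c1 c2 c3 : ℝ) : ℝ[X] := C (c1 * c2) * X ^ 2 + C c3 * X

noncomputable def sppsMajorant (c c1 c2 c3 : ℝ) (n : ℕ) (t : ℝ) : ℝ :=
  c * 2 ^ n * n ! * borelEval t (majorantPoly c1 c2 c3 ^ n)

theorem sppsMajorant_zero (t : ℝ) : sppsMajorant c c1 c2 c3 0 t = c := by
  have h1 : borelEval t 1 = 1 := by simpa using borelEval_monomial t 0 1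
  simp [sppsMajorant, h1]

theorem continuous_sppsMajorant (n : ℕ) : Continuous (sppsMajorant c c1 c2 c3 n) :=
  continuous_const.mul (continuous_borelEval _)

theorem integral_sppsMajorant (n : ℕ) (t : ℝ) :
    ∫ u in 0..t, sppsMajorant c c1 c2 c3 n u
      = c * 2 ^ n * n ! * borelEval t (X * majorantPoly c1 c2 c3 ^ n) := by
  simp only [sppsMajorant, intervalIntegral.integral_const_mul, integral_borelEval]

theorem sppsMajorant_succ (n : ℕ) (t : ℝ) :
    sppsMajorant c c1 c2 c3 (n + 1) t
      = (n + 1) * ∫ u in 0..t,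
          2 * (c3 * sppsMajorant c c1 c2 c3 n u
            + c1 * c2 * ∫ v in 0..u, sppsMajorant c c1 c2 c3 n v) := by
  have hintegrand : ∀ u, 2 * (c3 * sppsMajorant c c1 c2 c3 n u
        + c1 * c2 * ∫ v in 0..u, sppsMajorant c c1 c2 c3 n v)
      = 2 * c * 2 ^ n * n ! * borelEval u (C c3 * majorantPoly c1 c2 c3 ^ n
          + C (c1 * c2) * (X * majorantPoly c1 c2 c3 ^ n)) := by
    intro u
    rw [integral_sppsMajorant, sppsMajorant, map_add, borelEval_C_mul, borelEval_C_mul]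
    ring
  have hpoly : X * (C c3 * majorantPoly c1 c2 c3 ^ n
        + C (c1 * c2) * (X * majorantPoly c1 c2 c3 ^ n)) = majorantPoly c1 c2 c3 ^ (n + 1) := by
    rw [majorantPoly]
    ring
  simp_rw [hintegrand, intervalIntegral.integral_const_mul, integral_borelEval, hpoly]
  rw [sppsMajorant, factorial_succ]
  push_cast
  ring

theorem integral_two_mul_sppsMajorant (n : ℕ) (t : ℝ) :
    ∫ u in 0..t, 2 * c1 * sppsMajorant c c1 c2 c3 n u
      = c * c1 * 2 ^ (n + 1) * (n ! : ℝ) * ∑ k ∈ Finset.range (n + 1),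
          (n.choose k : ℝ) * (c1 * c2) ^ k * c3 ^ (n - k) * t ^ (n + k + 1)
            / ((n + k + 1)! : ℝ) := by
  rw [intervalIntegral.integral_const_mul, integral_sppsMajorant, majorantPoly,
    X_mul_C_mul_X_sq_add_C_mul_X_pow,
    map_sum, Finset.mul_sum, Finset.mul_sum, Finset.mul_sum]
  refine Finset.sum_congr rfl fun k _ => ?_
  rw [C_mul_X_pow_eq_monomial, borelEval_monomial]
  ring

end Majorant

theorem abs_integral_comp_abs_sub (φ : ℝ → ℝ) (x0 x : ℝ) :
    |(∫ s in x0..x, φ |s - x0|)| = |∫ u in 0..|x - x0|, φ u| := by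
  rw [integral_comp_sub_right (fun s => φ |s|) x0, sub_self]
  generalize x - x0 = y
  rcases le_total 0 y with hy | hy
  · rw [abs_of_nonneg hy, integral_congr (g := φ) fun u hu => by
      rw [uIcc_of_le hy] at hu; simp only [abs_of_nonneg hu.1]]
  · have hneg := integral_comp_neg (a := 0) (b := -y) fun u => φ |u|
    simp only [neg_neg, neg_zero, abs_neg] at hneg
    rw [abs_of_nonpos hy, integral_symm, ← hneg, abs_neg, integral_congr (g := φ) fun u hu => by
      rw [uIcc_of_le (neg_nonneg.2 hy)] at hu; simp only [abs_of_nonneg hu.1]]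

theorem norm_integral_le_integral_comp_abs_sub {E : Type*} [NormedAddCommGroup E]
    [NormedSpace ℝ E] {F : ℝ → E} {φ : ℝ → ℝ} {x0 x : ℝ} (hφ : Continuous φ)
    (h : ∀ s ∈ uIcc x0 x, ‖F s‖ ≤ φ |s - x0|) :
    ‖∫ s in x0..x, F s‖ ≤ ∫ u in 0..|x - x0|, φ u := by
  have hle : ‖∫ s in x0..x, F s‖ ≤ |(∫ s in x0..x, φ |s - x0|)| :=
    norm_integral_le_abs_of_norm_le
      ((ae_restrict_iff' measurableSet_uIoc).2 (ae_of_all _ fun s hs => h s (uIoc_subset_uIcc hs)))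
      ((hφ.comp (continuous_abs.comp (continuous_sub_right x0))).intervalIntegrable _ _)
  have hnonneg : 0 ≤ ∫ u in 0..|x - x0|, φ u := by
    refine integral_nonneg (abs_nonneg _) fun u hu => ?_
    have hsurj := intermediate_value_uIcc (f := fun s => |s - x0|) (a := x0) (b := x)
      (by fun_prop)
    obtain ⟨s, hs, rfl⟩ := hsurj (by simpa [uIcc_of_le (abs_nonneg (x - x0))] using hu)
    exact (norm_nonneg _).trans (h s hs)
  rwa [abs_integral_comp_abs_sub, abs_of_nonneg hnonneg] at hle

theorem norm_mul_add_mul_add_mul_le {R : Type*} [SeminormedRing R] (a b c u v w : R) :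
    ‖a * u + b * v + c * w‖ ≤ ‖a‖ * ‖u‖ + ‖b‖ * ‖v‖ + ‖c‖ * ‖w‖ :=
  norm_add₃_le.trans (by gcongr <;> exact norm_mul_le _ _)

theorem norm_neg_mul_sub_mul_add_mul_le {R : Type*} [SeminormedRing R] (a b c u v w : R) :
    ‖-a * u - b * v + c * w‖ ≤ ‖a‖ * ‖u‖ + ‖b‖ * ‖v‖ + ‖c‖ * ‖w‖ := by
  simpa only [neg_mul, sub_eq_add_neg, ← neg_mul, norm_neg] using
    norm_mul_add_mul_add_mul_le (-a) (-b) c u v w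

theorem norm_le_supNorm {a b : ℝ} {h : ℝ → ℂ} (hh : ContinuousOn h (Icc a b)) {x : ℝ}
    (hx : x ∈ Icc a b) : ‖h x‖ ≤ supNorm a b h :=
  le_csSup (isCompact_Icc.image_of_continuousOn hh.norm).bddAbove ⟨x, hx, rfl⟩

theorem continuousOn_primitive_Icc {E : Type*} [NormedAddCommGroup E] [NormedSpace ℝ E]
    {a b x0 : ℝ} {F : ℝ → E} (hx0 : x0 ∈ Icc a b)
    (hF : ContinuousOn F (Icc a b)) : ContinuousOn (fun x => ∫ s in x0..x, F s) (Icc a b) := by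
  have hab := uIcc_of_le (hx0.1.trans hx0.2)
  rw [← hab] at hF hx0
  simpa only [hab] using continuousOn_primitive_interval' hF.intervalIntegrable hx0

structure SppsBounds (a b c1 c2 c3 : ℝ) (p1 p2 r11 r12 r21 r22 f g : ℝ → ℂ) : Prop where
  kernel_X : ∀ x ∈ Icc a b, ‖f x ^ 2 * r11 x + g x ^ 2 * r21 x‖ ≤ c1
  kernel_Y : ∀ x ∈ Icc a b, ‖f x ^ 2 * r12 x + g x ^ 2 * r22 x‖ ≤ c1
  p1_div_g_sq : ∀ x ∈ Icc a b, ‖p1 x / g x ^ 2‖ ≤ c2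
  p2_div_f_sq : ∀ x ∈ Icc a b, ‖p2 x / f x ^ 2‖ ≤ c2
  r11_mul_f_div_g : ∀ x ∈ Icc a b, ‖r11 x * (f x / g x)‖ ≤ c3
  r12 : ∀ x ∈ Icc a b, ‖r12 x‖ ≤ c3
  r21 : ∀ x ∈ Icc a b, ‖r21 x‖ ≤ c3
  r22_mul_g_div_f : ∀ x ∈ Icc a b, ‖r22 x * (g x / f x)‖ ≤ c3

section FormalPowers

variable {a b x0 c c1 c2 c3 : ℝ} {p1 p2 r11 r12 r21 r22 f g X0 Y0 : ℝ → ℂ}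

theorem SppsBounds.of_continuousOn (hp1 : ContinuousOn p1 (Icc a b))
    (hp2 : ContinuousOn p2 (Icc a b)) (hr11 : ContinuousOn r11 (Icc a b))
    (hr12 : ContinuousOn r12 (Icc a b)) (hr21 : ContinuousOn r21 (Icc a b))
    (hr22 : ContinuousOn r22 (Icc a b)) (hfc : ContinuousOn f (Icc a b))
    (hgc : ContinuousOn g (Icc a b)) (hf : ∀ x ∈ Icc a b, f x ≠ 0)
    (hg : ∀ x ∈ Icc a b, g x ≠ 0) :
    SppsBounds a b
      (max (supNorm a b (fun x => f x ^ 2 * r11 x + g x ^ 2 * r21 x))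
        (supNorm a b (fun x => f x ^ 2 * r12 x + g x ^ 2 * r22 x)))
      (max (supNorm a b (fun x => p1 x / g x ^ 2)) (supNorm a b (fun x => p2 x / f x ^ 2)))
      (max (max (supNorm a b (fun x => r11 x * f x / g x)) (supNorm a b r12))
        (max (supNorm a b r21) (supNorm a b (fun x => r22 x * g x / f x))))
      p1 p2 r11 r12 r21 r22 f g where
  kernel_X x hx := (norm_le_supNorm (((hfc.pow 2).mul hr11).add ((hgc.pow 2).mul hr21)) hx).trans
    (le_max_left _ _)
  kernel_Y x hx := (norm_le_supNorm (((hfc.pow 2).mul hr12).add ((hgc.pow 2).mul hr22)) hx).trans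
    (le_max_right _ _)
  p1_div_g_sq x hx := (norm_le_supNorm (hp1.div (hgc.pow 2) fun y hy => pow_ne_zero 2 (hg y hy))
    hx).trans (le_max_left _ _)
  p2_div_f_sq x hx := (norm_le_supNorm (hp2.div (hfc.pow 2) fun y hy => pow_ne_zero 2 (hf y hy))
    hx).trans (le_max_right _ _)
  r11_mul_f_div_g x hx := by
    rw [← mul_div_assoc]
    exact (norm_le_supNorm ((hr11.mul hfc).div hgc hg) hx).trans
      ((le_max_left _ _).trans (le_max_left _ _))
  r12 x hx := (norm_le_supNorm hr12 hx).trans ((le_max_right _ _).trans (le_max_left _ _))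
  r21 x hx := (norm_le_supNorm hr21 hx).trans ((le_max_left _ _).trans (le_max_right _ _))
  r22_mul_g_div_f x hx := by
    rw [← mul_div_assoc]
    exact (norm_le_supNorm ((hr22.mul hgc).div hfc hf) hx).trans
      ((le_max_right _ _).trans (le_max_right _ _))

theorem norm_sppsInitial_le (hx0 : x0 ∈ Icc a b)
    (hP1 : ContinuousOn (fun x => p1 x / g x ^ 2) (Icc a b))
    (hP2 : ContinuousOn (fun x => p2 x / f x ^ 2) (Icc a b)) :
    let c := max (max (supNorm a b (sppsX0 p2 f g x0)) (supNorm a b (sppsY0 p1 f g x0)))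
      (max (supNorm a b (sppsXt0 p2 f g x0)) (supNorm a b (sppsYt0 p1 f g x0)))
    ∀ x ∈ Icc a b, ‖sppsX0 p2 f g x0 x‖ ≤ c ∧ ‖sppsY0 p1 f g x0 x‖ ≤ c ∧
      ‖sppsXt0 p2 f g x0 x‖ ≤ c ∧ ‖sppsYt0 p1 f g x0 x‖ ≤ c := by
  intro c x hx
  have hI1 := continuousOn_primitive_Icc hx0 hP1
  have hI2 := continuousOn_primitive_Icc hx0 hP2
  refine ⟨?_, ?_, ?_, ?_⟩
  · exact (norm_le_supNorm (continuousOn_const.mul hI2) hx).trans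
      ((le_max_left _ _).trans (le_max_left _ _))
  · exact (norm_le_supNorm (continuousOn_const.add (continuousOn_const.mul hI1)) hx).trans
      ((le_max_right _ _).trans (le_max_left _ _))
  · exact (norm_le_supNorm (continuousOn_const.sub (continuousOn_const.mul hI2)) hx).trans
      ((le_max_left _ _).trans (le_max_right _ _))
  · exact (norm_le_supNorm (continuousOn_const.mul hI1) hx).trans
      ((le_max_right _ _).trans (le_max_right _ _))

theorem norm_sppsZ_le (hbd : SppsBounds a b c1 c2 c3 p1 p2 r11 r12 r21 r22 f g)
    (hx0 : x0 ∈ Icc a b) {n : ℕ}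
    (hXY : ∀ x ∈ Icc a b,
      ‖(spps p1 p2 r11 r12 r21 r22 f g x0 X0 Y0 n).1 x‖ ≤ sppsMajorant c c1 c2 c3 n |x - x0| ∧
      ‖(spps p1 p2 r11 r12 r21 r22 f g x0 X0 Y0 n).2 x‖ ≤ sppsMajorant c c1 c2 c3 n |x - x0|)
    {x : ℝ} (hx : x ∈ Icc a b) :
    ‖sppsZ p1 p2 r11 r12 r21 r22 f g x0 X0 Y0 n x‖
      ≤ ∫ u in 0..|x - x0|, 2 * c1 * sppsMajorant c c1 c2 c3 n u := by
  refine norm_integral_le_integral_comp_abs_sub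
    (continuous_const.mul (continuous_sppsMajorant n)) fun s hs => ?_
  have hs' : s ∈ Icc a b := uIcc_subset_Icc hx0 hx hs
  obtain ⟨hX, hY⟩ := hXY s hs'
  calc _ ≤ _ := norm_add_le _ _
    _ ≤ sppsMajorant c c1 c2 c3 n |s - x0| * c1 + sppsMajorant c c1 c2 c3 n |s - x0| * c1 := by
      rw [norm_mul, norm_mul]
      exact add_le_add
        (mul_le_mul hX (hbd.kernel_X s hs') (norm_nonneg _) ((norm_nonneg _).trans hX))
        (mul_le_mul hY (hbd.kernel_Y s hs') (norm_nonneg _) ((norm_nonneg _).trans hY))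
    _ = 2 * c1 * sppsMajorant c c1 c2 c3 n |s - x0| := by ring

theorem norm_succ_mul_integral_le_sppsMajorant
    (hbd : SppsBounds a b c1 c2 c3 p1 p2 r11 r12 r21 r22 f g) (hx0 : x0 ∈ Icc a b) {n : ℕ}
    (hXY : ∀ x ∈ Icc a b,
      ‖(spps p1 p2 r11 r12 r21 r22 f g x0 X0 Y0 n).1 x‖ ≤ sppsMajorant c c1 c2 c3 n |x - x0| ∧
      ‖(spps p1 p2 r11 r12 r21 r22 f g x0 X0 Y0 n).2 x‖ ≤ sppsMajorant c c1 c2 c3 n |x - x0|)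
    {F A B P : ℝ → ℂ}
    (hF : ∀ s, ‖F s‖ ≤ ‖A s‖ * ‖(spps p1 p2 r11 r12 r21 r22 f g x0 X0 Y0 n).1 s‖
      + ‖B s‖ * ‖(spps p1 p2 r11 r12 r21 r22 f g x0 X0 Y0 n).2 s‖
      + ‖P s‖ * ‖sppsZ p1 p2 r11 r12 r21 r22 f g x0 X0 Y0 n s‖)
    (hA : ∀ s ∈ Icc a b, ‖A s‖ ≤ c3) (hB : ∀ s ∈ Icc a b, ‖B s‖ ≤ c3)
    (hP : ∀ s ∈ Icc a b, ‖P s‖ ≤ c2) {x : ℝ} (hx : x ∈ Icc a b) :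
    ‖((n : ℂ) + 1) * ∫ s in x0..x, F s‖ ≤ sppsMajorant c c1 c2 c3 (n + 1) |x - x0| := by
  have hM := continuous_sppsMajorant (c := c) (c1 := c1) (c2 := c2) (c3 := c3) n
  rw [norm_mul, show ((n : ℂ) + 1) = ((n + 1 : ℕ) : ℂ) by push_cast; rfl, Complex.norm_natCast,
    sppsMajorant_succ]
  push_cast
  gcongr
  refine norm_integral_le_integral_comp_abs_sub (continuous_const.mul ((continuous_const.mul hM).add
    (continuous_const.mul (continuous_primitive (fun _ _ => hM.intervalIntegrable _ _) 0))))
    fun s hs => ?_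
  have hs' : s ∈ Icc a b := uIcc_subset_Icc hx0 hx hs
  obtain ⟨hX, hY⟩ := hXY s hs'
  have hZ := norm_sppsZ_le hbd hx0 hXY hs'
  have hc3 : 0 ≤ c3 := (norm_nonneg _).trans (hA s hs')
  calc ‖F s‖ ≤ _ := hF s
    _ ≤ c3 * sppsMajorant c c1 c2 c3 n |s - x0| + c3 * sppsMajorant c c1 c2 c3 n |s - x0|
        + c2 * ∫ u in 0..|s - x0|, 2 * c1 * sppsMajorant c c1 c2 c3 n u :=
      add_le_add (add_le_add (mul_le_mul (hA s hs') hX (norm_nonneg _) hc3)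
        (mul_le_mul (hB s hs') hY (norm_nonneg _) hc3))
        (mul_le_mul (hP s hs') hZ (norm_nonneg _) ((norm_nonneg _).trans (hP s hs')))
    _ = _ := by rw [intervalIntegral.integral_const_mul]; ring

theorem norm_spps_le (hbd : SppsBounds a b c1 c2 c3 p1 p2 r11 r12 r21 r22 f g)
    (hx0 : x0 ∈ Icc a b) (hX0 : ∀ x ∈ Icc a b, ‖X0 x‖ ≤ c) (hY0 : ∀ x ∈ Icc a b, ‖Y0 x‖ ≤ c)
    (n : ℕ) : ∀ x ∈ Icc a b,
      ‖(spps p1 p2 r11 r12 r21 r22 f g x0 X0 Y0 n).1 x‖ ≤ sppsMajorant c c1 c2 c3 n |x - x0| ∧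
      ‖(spps p1 p2 r11 r12 r21 r22 f g x0 X0 Y0 n).2 x‖ ≤ sppsMajorant c c1 c2 c3 n |x - x0| := by
  induction n with
  | zero => simpa only [spps, sppsMajorant_zero] using fun x hx => ⟨hX0 x hx, hY0 x hx⟩
  | succ n ih =>
    intro x hx
    exact ⟨norm_succ_mul_integral_le_sppsMajorant hbd hx0 ih
        (fun s => norm_neg_mul_sub_mul_add_mul_le _ _ _ _ _ _) hbd.r21 hbd.r22_mul_g_div_f
        hbd.p2_div_f_sq hx,
      norm_succ_mul_integral_le_sppsMajorant hbd hx0 ih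
        (fun s => norm_mul_add_mul_add_mul_le _ _ _ _ _ _) hbd.r11_mul_f_div_g hbd.r12
        hbd.p1_div_g_sq hx⟩

end FormalPowers

theorem spps_Z_estimate_general (a b x0 : ℝ) (hx0 : x0 ∈ Icc a b)
    (p1 p2 q r11 r12 r21 r22 f g : ℝ → ℂ)
    (hp1 : ContinuousOn p1 (Icc a b)) (hp2 : ContinuousOn p2 (Icc a b))
    (hr11 : ContinuousOn r11 (Icc a b)) (hr12 : ContinuousOn r12 (Icc a b))
    (hr21 : ContinuousOn r21 (Icc a b)) (hr22 : ContinuousOn r22 (Icc a b))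
    (hf : ∀ x ∈ Icc a b, f x ≠ 0) (hg : ∀ x ∈ Icc a b, g x ≠ 0)
    (hsys : ∀ x ∈ Icc a b,
      HasDerivWithinAt g (-(p1 x * f x) - q x * g x) (Icc a b) x ∧
      HasDerivWithinAt f (q x * f x + p2 x * g x) (Icc a b) x)
    (c c1 c2 c3 : ℝ)
    (hc : c = max (max (supNorm a b (sppsX0 p2 f g x0)) (supNorm a b (sppsY0 p1 f g x0)))
      (max (supNorm a b (sppsXt0 p2 f g x0)) (supNorm a b (sppsYt0 p1 f g x0))))
    (hc1 : c1 = max (supNorm a b (fun x => f x ^ 2 * r11 x + g x ^ 2 * r21 x))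
      (supNorm a b (fun x => f x ^ 2 * r12 x + g x ^ 2 * r22 x)))
    (hc2 : c2 = max (supNorm a b (fun x => p1 x / g x ^ 2))
      (supNorm a b (fun x => p2 x / f x ^ 2)))
    (hc3 : c3 = max (max (supNorm a b (fun x => r11 x * f x / g x)) (supNorm a b r12))
      (max (supNorm a b r21) (supNorm a b (fun x => r22 x * g x / f x)))) :
    ∀ n : ℕ, ∀ x ∈ Icc a b,
      max ‖
            (sppsZ p1 p2 r11 r12 r21 r22 f g x0 (sppsX0 p2 f g x0) (sppsY0 p1 f g x0) n x)‖
          ‖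
            (sppsZ p1 p2 r11 r12 r21 r22 f g x0 (sppsXt0 p2 f g x0) (sppsYt0 p1 f g x0) n x)‖
        ≤ c * c1 * 2 ^ (n + 1) * (n.factorial : ℝ) * ∑ k ∈ Finset.range (n + 1),
            (n.choose k : ℝ) * (c1 * c2) ^ k * c3 ^ (n - k) * |x - x0| ^ (n + k + 1)
              / ((n + k + 1).factorial : ℝ) := by
  intro n x hx
  subst hc hc1 hc2 hc3
  have hfc : ContinuousOn f (Icc a b) := fun y hy => (hsys y hy).2.continuousWithinAt
  have hgc : ContinuousOn g (Icc a b) := fun y hy => (hsys y hy).1.continuousWithinAt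
  have hbd := SppsBounds.of_continuousOn hp1 hp2 hr11 hr12 hr21 hr22 hfc hgc hf hg
  have hinit := norm_sppsInitial_le hx0
    (hp1.div (hgc.pow 2) fun y hy => pow_ne_zero 2 (hg y hy))
    (hp2.div (hfc.pow 2) fun y hy => pow_ne_zero 2 (hf y hy))
  rw [← integral_two_mul_sppsMajorant]
  exact max_le
    (norm_sppsZ_le hbd hx0 (norm_spps_le hbd hx0 (fun y hy => (hinit y hy).1)
      (fun y hy => (hinit y hy).2.1) n) hx)
    (norm_sppsZ_le hbd hx0 (norm_spps_le hbd hx0 (fun y hy => (hinit y hy).2.2.1)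
      (fun y hy => (hinit y hy).2.2.2) n) hx)

/-- the estimate for the formal powers Z⁽ⁿ⁾, Z̃⁽ⁿ⁾. -/
theorem spps_Z_estimate (a b x0 : ℝ) (hab : a ≤ b) (hx0 : x0 ∈ Icc a b)
    (p1 p2 q r11 r12 r21 r22 f g : ℝ → ℂ)
    (hp1 : ContinuousOn p1 (Icc a b)) (hp2 : ContinuousOn p2 (Icc a b))
    (hq : ContinuousOn q (Icc a b))
    (hr11 : ContinuousOn r11 (Icc a b)) (hr12 : ContinuousOn r12 (Icc a b))
    (hr21 : ContinuousOn r21 (Icc a b)) (hr22 : ContinuousOn r22 (Icc a b))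
    (hf : ∀ x ∈ Icc a b, f x ≠ 0) (hg : ∀ x ∈ Icc a b, g x ≠ 0)
    (hsys : ∀ x ∈ Icc a b,
      HasDerivWithinAt g (-(p1 x * f x) - q x * g x) (Icc a b) x ∧
      HasDerivWithinAt f (q x * f x + p2 x * g x) (Icc a b) x)
    (S St : ℕ → (ℝ → ℂ) × (ℝ → ℂ))
    (hS : S = spps p1 p2 r11 r12 r21 r22 f g x0 (sppsX0 p2 f g x0) (sppsY0 p1 f g x0))
    (hSt : St = spps p1 p2 r11 r12 r21 r22 f g x0 (sppsXt0 p2 f g x0) (sppsYt0 p1 f g x0))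
    (c c1 c2 c3 : ℝ)
    (hc : c = max (max (supNorm a b (sppsX0 p2 f g x0)) (supNorm a b (sppsY0 p1 f g x0)))
      (max (supNorm a b (sppsXt0 p2 f g x0)) (supNorm a b (sppsYt0 p1 f g x0))))
    (hc1 : c1 = max (supNorm a b (fun x => f x ^ 2 * r11 x + g x ^ 2 * r21 x))
      (supNorm a b (fun x => f x ^ 2 * r12 x + g x ^ 2 * r22 x)))
    (hc2 : c2 = max (supNorm a b (fun x => p1 x / g x ^ 2))
      (supNorm a b (fun x => p2 x / f x ^ 2)))
    (hc3 : c3 = max (max (supNorm a b (fun x => r11 x * f x / g x)) (supNorm a b r12))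
      (max (supNorm a b r21) (supNorm a b (fun x => r22 x * g x / f x)))) :
    ∀ n : ℕ, ∀ x ∈ Icc a b,
      max ‖
            (sppsZ p1 p2 r11 r12 r21 r22 f g x0 (sppsX0 p2 f g x0) (sppsY0 p1 f g x0) n x)‖
          ‖
            (sppsZ p1 p2 r11 r12 r21 r22 f g x0 (sppsXt0 p2 f g x0) (sppsYt0 p1 f g x0) n x)‖
        ≤ c * c1 * 2 ^ (n + 1) * (n.factorial : ℝ) * ∑ k ∈ Finset.range (n + 1),
            (n.choose k : ℝ) * (c1 * c2) ^ k * c3 ^ (n - k) * |x - x0| ^ (n + k + 1)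
              / ((n + k + 1).factorial : ℝ) :=
  spps_Z_estimate_general a b x0 hx0 p1 p2 q r11 r12 r21 r22 f g hp1 hp2 hr11 hr12 hr21 hr22 hf hg
    hsys c c1 c2 c3 hc hc1 hc2 hc3
end

section
/- If (u_1,v_1)^T and (u_2,v_2)^T are two linearly independent solutions of the homogeneous Dirac system on [a,b], then there exist complex constants c_1, c_2 such that both u = c_1 u_1 + c_2 u_2 and v = c_1 v_1 + c_2 v_2 have no zeros on [a,b]; moreover the set of ratios [c_1 : c_2] ∈ ℂP¹ for which the combination vanishes somewhere has measure zero. -/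
/-!
By uniqueness for the linear Dirac system, a nontrivial combination of the two solutions vanishes
at no point, so the Wronskian `u₁ v₂ - u₂ v₁` never vanishes and `u₁, u₂` (likewise `v₁, v₂`) have
no common zero. The ratios `z` with `u₁ x + z u₂ x = 0` for some `x` then form the image of the
differentiable curve `-u₁ / u₂`, which is null in `ℂ`; similarly for `v`. Any `z` outside these
two null sets gives `c₁ = 1`, `c₂ = z`.
-/

open Set MeasureTheory Measure ContinuousLinearMap

/-- `f '' s` is the image of the null set `s ⊆ ℝ ⊆ ℂ` under the differentiable map `z ↦ f (re z)`. -/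
theorem addHaar_image_eq_zero_of_differentiableOn_real (μ : Measure ℂ) [μ.IsAddHaarMeasure]
    {f : ℝ → ℂ} {s : Set ℝ} (hf : DifferentiableOn ℝ f s) : μ (f '' s) = 0 := by
  have hreal : μ (LinearMap.range Complex.ofRealCLM.toLinearMap) = 0 := by
    refine addHaar_submodule μ _ fun htop => ?_
    obtain ⟨x, hx⟩ := LinearMap.range_eq_top.mp htop Complex.I
    simpa using congrArg Complex.im hx
  have hdiff : DifferentiableOn ℝ (f ∘ Complex.re) (Complex.ofReal '' s) :=
    hf.comp Complex.reCLM.differentiableOn (by rintro _ ⟨x, hx, rfl⟩; simpa using hx)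
  have himage : (f ∘ Complex.re) '' (Complex.ofReal '' s) = f '' s := by
    rw [image_image]; simp
  rw [← himage]
  refine addHaar_image_eq_zero_of_differentiableOn_of_addHaar_eq_zero μ hdiff
    (measure_mono_null ?_ hreal)
  rintro _ ⟨x, -, rfl⟩
  exact ⟨x, rfl⟩

theorem addHaar_setOf_exists_add_mul_eq_zero (μ : Measure ℂ) [μ.IsAddHaarMeasure]
    {w₁ w₂ : ℝ → ℂ} {s : Set ℝ} (h₁ : DifferentiableOn ℝ w₁ s) (h₂ : DifferentiableOn ℝ w₂ s)
    (hw : ∀ x ∈ s, w₁ x ≠ 0 ∨ w₂ x ≠ 0) :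
    μ {z | ∃ x ∈ s, w₁ x + z * w₂ x = 0} = 0 := by
  set s' := {x ∈ s | w₂ x ≠ 0}
  have hsub : {z | ∃ x ∈ s, w₁ x + z * w₂ x = 0} ⊆ (fun x => -w₁ x / w₂ x) '' s' := by
    rintro z ⟨x, hx, hz⟩
    have hx₂ : w₂ x ≠ 0 := fun h => (hw x hx).elim (fun h₁ => h₁ (by simpa [h] using hz)) (· h)
    exact ⟨x, ⟨hx, hx₂⟩, by field_simp; linear_combination -hz⟩
  refine measure_mono_null hsub (addHaar_image_eq_zero_of_differentiableOn_real μ ?_)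
  exact ((h₁.mono (sep_subset _ _)).neg.div (h₂.mono (sep_subset _ _)) fun x hx => hx.2)

section LinearODE

variable {𝕜 E : Type*} [NontriviallyNormedField 𝕜] [NormedAddCommGroup E] [NormedSpace ℝ E]
  [NormedSpace 𝕜 E] {A : ℝ → E →L[𝕜] E} {a b : ℝ}

theorem eqOn_zero_of_hasDerivWithinAt_clm_apply {y : ℝ → E} {t₀ : ℝ}
    (hA : ContinuousOn A (Icc a b))
    (hy : ∀ t ∈ Icc a b, HasDerivWithinAt y (A t (y t)) (Icc a b) t)
    (ht₀ : t₀ ∈ Icc a b) (hy₀ : y t₀ = 0) : EqOn y 0 (Icc a b) := by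
  obtain ⟨K, hK⟩ := isCompact_Icc.exists_bound_of_continuousOn hA
  have hlip : ∀ t ∈ Icc a b, LipschitzOnWith K.toNNReal (A t) univ := fun t ht =>
    ((A t).lipschitz.weaken (by
      simpa [← norm_toNNReal] using Real.toNNReal_le_toNNReal (hK t ht))).lipschitzOnWith
  have hzero : ∀ t, HasDerivWithinAt (0 : ℝ → E) (A t ((0 : ℝ → E) t)) (Icc a b) t := fun t => by
    simpa using hasDerivWithinAt_zero t (Icc a b)
  have hyc : ContinuousOn y (Icc a b) := fun t ht => (hy t ht).continuousWithinAt
  rw [← Icc_union_Icc_eq_Icc ht₀.1 ht₀.2]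
  refine EqOn.union ?_ ?_
  · refine ODE_solution_unique_of_mem_Icc_left (fun t ht => hlip t ⟨ht.1.le, ht.2.trans ht₀.2⟩)
      (hyc.mono (Icc_subset_Icc_right ht₀.2)) (fun t ht => ?_) (fun _ _ => mem_univ _)
      continuousOn_const (fun t ht => ?_) (fun _ _ => mem_univ _) hy₀
    · exact (hy t ⟨ht.1.le, ht.2.trans ht₀.2⟩).mono_of_mem_nhdsWithin
        (Icc_mem_nhdsLE_of_mem ⟨ht.1, ht.2.trans ht₀.2⟩)
    · exact (hzero t).mono_of_mem_nhdsWithin (Icc_mem_nhdsLE_of_mem ⟨ht.1, ht.2.trans ht₀.2⟩)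
  · refine ODE_solution_unique_of_mem_Icc_right (fun t ht => hlip t ⟨ht₀.1.trans ht.1, ht.2.le⟩)
      (hyc.mono (Icc_subset_Icc_left ht₀.1)) (fun t ht => ?_) (fun _ _ => mem_univ _)
      continuousOn_const (fun t ht => ?_) (fun _ _ => mem_univ _) hy₀
    · exact (hy t ⟨ht₀.1.trans ht.1, ht.2.le⟩).mono_of_mem_nhdsWithin
        (Icc_mem_nhdsGE_of_mem ⟨ht₀.1.trans ht.1, ht.2⟩)
    · exact (hzero t).mono_of_mem_nhdsWithin (Icc_mem_nhdsGE_of_mem ⟨ht₀.1.trans ht.1, ht.2⟩)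

theorem linearIndependent_apply_of_hasDerivWithinAt [SMulCommClass ℝ 𝕜 E] {ι : Type*}
    [Fintype ι] {Y : ι → ℝ → E} (hA : ContinuousOn A (Icc a b))
    (hY : ∀ i, ∀ t ∈ Icc a b, HasDerivWithinAt (Y i) (A t (Y i t)) (Icc a b) t)
    (hli : LinearIndependent 𝕜 fun i => fun t : Icc a b => Y i t) {x : ℝ} (hx : x ∈ Icc a b) :
    LinearIndependent 𝕜 fun i => Y i x := by
  refine Fintype.linearIndependent_iff.mpr fun c hc => Fintype.linearIndependent_iff.mp hli c ?_
  have hsol : ∀ t ∈ Icc a b, HasDerivWithinAt (∑ i, c i • Y i) (A t ((∑ i, c i • Y i) t))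
      (Icc a b) t := fun t ht => by
    simpa using HasDerivWithinAt.sum fun i _ => (hY i t ht).const_smul (c i)
  ext t : 1
  simpa using eqOn_zero_of_hasDerivWithinAt_clm_apply hA hsol hx (by simpa using hc) t.2

end LinearODE

/-- The coefficient matrix `[[q, p₂], [-p₁, -q]]` of the Dirac system
`u' = q u + p₂ v`, `v' = -p₁ u - q v`. -/
noncomputable def diracCoeff (p₁ p₂ q : ℂ) : ℂ × ℂ →L[ℂ] ℂ × ℂ :=
  q • (inl ℂ ℂ ℂ ∘L fst ℂ ℂ ℂ - inr ℂ ℂ ℂ ∘L snd ℂ ℂ ℂ) + p₂ • (inl ℂ ℂ ℂ ∘L snd ℂ ℂ ℂ)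
    - p₁ • (inr ℂ ℂ ℂ ∘L fst ℂ ℂ ℂ)

@[simp]
theorem diracCoeff_apply (p₁ p₂ q u v : ℂ) :
    diracCoeff p₁ p₂ q (u, v) = (q * u + p₂ * v, -(p₁ * u) - q * v) := by
  ext <;> simp [diracCoeff]
  ring

theorem ContinuousOn.diracCoeff {p₁ p₂ q : ℝ → ℂ} {s : Set ℝ} (hp₁ : ContinuousOn p₁ s)
    (hp₂ : ContinuousOn p₂ s) (hq : ContinuousOn q s) :
    ContinuousOn (fun t => diracCoeff (p₁ t) (p₂ t) (q t)) s := by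
  unfold _root_.diracCoeff
  fun_prop

theorem hasDerivWithinAt_diracCoeff {u v : ℝ → ℂ} {p₁ p₂ q : ℂ} {s : Set ℝ} {x : ℝ}
    (hu : HasDerivWithinAt u (q * u x + p₂ * v x) s x)
    (hv : HasDerivWithinAt v (-(p₁ * u x) - q * v x) s x) :
    HasDerivWithinAt (fun t => (u t, v t)) (diracCoeff p₁ p₂ q (u x, v x)) s x := by
  simpa using hu.prodMk hv

theorem wronskian_ne_zero_of_linearIndependent {K : Type*} [Field K] {u₁ v₁ u₂ v₂ : K}
    (h : LinearIndependent K ![(u₁, v₁), (u₂, v₂)]) : u₁ * v₂ - u₂ * v₁ ≠ 0 := by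
  intro hW
  have hv := LinearIndependent.pair_iff.mp h v₂ (-v₁) <| by
    simp only [Prod.smul_mk, smul_eq_mul, Prod.mk_add_mk, Prod.mk_eq_zero]
    exact ⟨by linear_combination hW, by ring⟩
  have hu := LinearIndependent.pair_iff.mp h u₂ (-u₁) <| by
    simp only [Prod.smul_mk, smul_eq_mul, Prod.mk_add_mk, Prod.mk_eq_zero]
    exact ⟨by ring, by linear_combination -hW⟩
  exact h.ne_zero 0 (by ext <;> simp_all)

def IsDiracSolution (p₁ p₂ q u v : ℝ → ℂ) (s : Set ℝ) : Prop :=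
  ∀ x ∈ s, HasDerivWithinAt v (-(p₁ x * u x) - q x * v x) s x ∧
    HasDerivWithinAt u (q x * u x + p₂ x * v x) s x

theorem IsDiracSolution.wronskian_ne_zero {a b : ℝ} {p₁ p₂ q u₁ v₁ u₂ v₂ : ℝ → ℂ}
    (hp₁ : ContinuousOn p₁ (Icc a b)) (hp₂ : ContinuousOn p₂ (Icc a b))
    (hq : ContinuousOn q (Icc a b)) (h₁ : IsDiracSolution p₁ p₂ q u₁ v₁ (Icc a b))
    (h₂ : IsDiracSolution p₁ p₂ q u₂ v₂ (Icc a b))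
    (hli : LinearIndependent ℂ
      ![fun x : Icc a b => (u₁ x.1, v₁ x.1), fun x : Icc a b => (u₂ x.1, v₂ x.1)])
    {x : ℝ} (hx : x ∈ Icc a b) : u₁ x * v₂ x - u₂ x * v₁ x ≠ 0 := by
  set Y : Fin 2 → ℝ → ℂ × ℂ := ![fun x => (u₁ x, v₁ x), fun x => (u₂ x, v₂ x)]
  have hY : ∀ i, ∀ x ∈ Icc a b,
      HasDerivWithinAt (Y i) (diracCoeff (p₁ x) (p₂ x) (q x) (Y i x)) (Icc a b) x := by
    intro i x hx
    fin_cases i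
    exacts [hasDerivWithinAt_diracCoeff (h₁ x hx).2 (h₁ x hx).1,
      hasDerivWithinAt_diracCoeff (h₂ x hx).2 (h₂ x hx).1]
  have hYli : LinearIndependent ℂ fun i => fun t : Icc a b => Y i t := by
    convert hli using 1; ext i : 1; fin_cases i <;> rfl
  have hYx : (fun i => Y i x) = ![(u₁ x, v₁ x), (u₂ x, v₂ x)] := by
    ext i : 1; fin_cases i <;> rfl
  refine wronskian_ne_zero_of_linearIndependent ?_
  rw [← hYx]
  exact linearIndependent_apply_of_hasDerivWithinAt (hp₁.diracCoeff hp₂ hq) hY hYli hx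

/-- for two linearly independent solutions of the homogeneous Dirac system
there exist complex constants c₁, c₂ such that both combinations c₁u₁+c₂u₂ and c₁v₁+c₂v₂
have no zeros on [a,b]; moreover the set of ratios (in the affine chart z ↦ [1 : z] of ℂP¹)
for which the combination vanishes somewhere has measure zero. -/
theorem exists_nonvanishing_combination (a b : ℝ) (p1 p2 q : ℝ → ℂ) (u1 v1 u2 v2 : ℝ → ℂ)
    (hp1 : ContinuousOn p1 (Icc a b)) (hp2 : ContinuousOn p2 (Icc a b))
    (hq : ContinuousOn q (Icc a b))
    (hsys1 : ∀ x ∈ Icc a b,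
      HasDerivWithinAt v1 (-(p1 x * u1 x) - q x * v1 x) (Icc a b) x ∧
      HasDerivWithinAt u1 (q x * u1 x + p2 x * v1 x) (Icc a b) x)
    (hsys2 : ∀ x ∈ Icc a b,
      HasDerivWithinAt v2 (-(p1 x * u2 x) - q x * v2 x) (Icc a b) x ∧
      HasDerivWithinAt u2 (q x * u2 x + p2 x * v2 x) (Icc a b) x)
    (hLI : LinearIndependent ℂ
      ![fun x : Icc a b => (u1 x.1, v1 x.1), fun x : Icc a b => (u2 x.1, v2 x.1)]) :
    (∃ c1 c2 : ℂ, ∀ x ∈ Icc a b,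
      c1 * u1 x + c2 * u2 x ≠ 0 ∧ c1 * v1 x + c2 * v2 x ≠ 0) ∧
    volume {z : ℂ | ∃ x ∈ Icc a b,
      u1 x + z * u2 x = 0 ∨ v1 x + z * v2 x = 0} = 0 := by
  have hW : ∀ x ∈ Icc a b, u1 x * v2 x - u2 x * v1 x ≠ 0 := fun x hx =>
    IsDiracSolution.wronskian_ne_zero hp1 hp2 hq hsys1 hsys2 hLI hx
  have hu : ∀ x ∈ Icc a b, u1 x ≠ 0 ∨ u2 x ≠ 0 := fun x hx => by
    by_contra! h; exact hW x hx (by simp [h.1, h.2])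
  have hv : ∀ x ∈ Icc a b, v1 x ≠ 0 ∨ v2 x ≠ 0 := fun x hx => by
    by_contra! h; exact hW x hx (by simp [h.1, h.2])
  have hnull : volume {z : ℂ | ∃ x ∈ Icc a b, u1 x + z * u2 x = 0 ∨ v1 x + z * v2 x = 0} = 0 := by
    refine measure_mono_null (fun z ⟨x, hx, h⟩ => h.imp (⟨x, hx, ·⟩) (⟨x, hx, ·⟩))
      (measure_union_null (addHaar_setOf_exists_add_mul_eq_zero volume ?_ ?_ hu)
        (addHaar_setOf_exists_add_mul_eq_zero volume ?_ ?_ hv))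
    exacts [fun x hx => (hsys1 x hx).2.differentiableWithinAt,
      fun x hx => (hsys2 x hx).2.differentiableWithinAt,
      fun x hx => (hsys1 x hx).1.differentiableWithinAt,
      fun x hx => (hsys2 x hx).1.differentiableWithinAt]
  obtain ⟨z, hz⟩ := (measure_eq_zero_iff_ae_notMem.mp hnull).exists
  exact ⟨⟨1, z, fun x hx => ⟨fun h => hz ⟨x, hx, .inl (by simpa using h)⟩,
    fun h => hz ⟨x, hx, .inr (by simpa using h)⟩⟩⟩, hnull⟩
end
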